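/- Subject reduction for closed terms: if ⊢ t : A and t ↦* u under call-by-name reduction, then ⊢ u : A. -/

import Mathlib

/-- Types of the guarded lambda calculus:
`A ::= α | N | 1 | A×A | 0 | A+A | A→A | μα.A | ▶A | ■A`
(with named type variables; `■A` is only formed for closed `A`). -/
inductive GTy : Type
  | var (x : ℕ)
  | natT
  | unitT
  | emptyT
  | prod (A B : GTy)
  | sum (A B : GTy)
  | arrow (A B : GTy)
  | mu (x : ℕ) (A : GTy)
  | later (A : GTy)
  | box (A : GTy)

/-- Substitution `A[B/α]` of `B` for the free occurrences of variable `α` in `A`.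
Since `■C` is only formed for closed `C`, substitution does not proceed under `■`. -/
def GTy.subst : GTy → GTy → ℕ → GTy
  | .var y, B, a => if y = a then B else .var y
  | .natT, _, _ => .natT
  | .unitT, _, _ => .unitT
  | .emptyT, _, _ => .emptyT
  | .prod A1 A2, B, a => .prod (A1.subst B a) (A2.subst B a)
  | .sum A1 A2, B, a => .sum (A1.subst B a) (A2.subst B a)
  | .arrow A1 A2, B, a => .arrow (A1.subst B a) (A2.subst B a)
  | .mu x A, B, a => if x = a then .mu x A else .mu x (A.subst B a)
  | .later A, B, a => .later (A.subst B a)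
  | .box A, _, _ => .box A

/-- Terms of the guarded lambda calculus, with named variables.  Explicit
substitutions `σ` (attached to `prev` and `box`) are lists of (variable, term)
pairs. -/
inductive Tm : Type
  | var (x : ℕ)
  | zero
  | succ (t : Tm)
  | unit
  | pair (t u : Tm)
  | fst (t : Tm)
  | snd (t : Tm)
  | abort (t : Tm)
  | inl (t : Tm)
  | inr (t : Tm)
  | case (t : Tm) (x1 : ℕ) (t1 : Tm) (x2 : ℕ) (t2 : Tm)
  | lam (x : ℕ) (t : Tm)
  | app (t u : Tm)
  | fold (t : Tm)
  | unfold (t : Tm)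
  | next (t : Tm)
  | prev (s : List (ℕ × Tm)) (t : Tm)
  | ap (t u : Tm)
  | box (s : List (ℕ × Tm)) (t : Tm)
  | unbox (t : Tm)

/-- Simultaneous substitution of an environment `r` (a partial map from variables
to terms) into a term.  `prev[x⃗←t⃗].t` and `box[x⃗←t⃗].t` bind all the variables
`x⃗` in `t` (but not in `t⃗`), so substitution acts only on the attached explicit
substitution. -/
def Tm.msubst (r : ℕ → Option Tm) : Tm → Tm
  | .var x => (r x).getD (.var x)
  | .zero => .zero
  | .succ t => .succ (t.msubst r)
  | .unit => .unit
  | .pair t u => .pair (t.msubst r) (u.msubst r)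
  | .fst t => .fst (t.msubst r)
  | .snd t => .snd (t.msubst r)
  | .abort t => .abort (t.msubst r)
  | .inl t => .inl (t.msubst r)
  | .inr t => .inr (t.msubst r)
  | .case t x1 t1 x2 t2 =>
      .case (t.msubst r)
        x1 (t1.msubst (fun y => if y = x1 then none else r y))
        x2 (t2.msubst (fun y => if y = x2 then none else r y))
  | .lam x t => .lam x (t.msubst (fun y => if y = x then none else r y))
  | .app t u => .app (t.msubst r) (u.msubst r)
  | .fold t => .fold (t.msubst r)
  | .unfold t => .unfold (t.msubst r)
  | .next t => .next (t.msubst r)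
  | .prev s t => .prev (s.attach.map (fun p => (p.1.1, p.1.2.msubst r))) t
  | .ap t u => .ap (t.msubst r) (u.msubst r)
  | .box s t => .box (s.attach.map (fun p => (p.1.1, p.1.2.msubst r))) t
  | .unbox t => .unbox (t.msubst r)
termination_by t => sizeOf t
decreasing_by
  all_goals simp_wf
  all_goals try omega
  all_goals
    obtain ⟨⟨a, b⟩, hp⟩ := p
  all_goals
    have := List.sizeOf_lt_of_mem hp
  all_goals
    simp at this ⊢
  all_goals omega

/-- Single substitution `t[u/x]`. -/
def Tm.sub1 (t u : Tm) (x : ℕ) : Tm :=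
  t.msubst (fun y => if y = x then some u else none)

/-- Simultaneous substitution `t[t⃗/x⃗]` induced by an explicit substitution. -/
def Tm.subList (s : List (ℕ × Tm)) (t : Tm) : Tm :=
  t.msubst (fun y => (s.find? (fun p => p.1 = y)).map Prod.snd)

/-- Numerals `succⁿ zero`. -/
inductive IsNumeral : Tm → Prop
  | zero : IsNumeral .zero
  | succ {t : Tm} : IsNumeral t → IsNumeral (.succ t)

/-- Values of the guarded lambda calculus. -/
inductive IsValue : Tm → Prop
  | num {t : Tm} : IsNumeral t → IsValue t
  | unit : IsValue .unit
  | pair (t u : Tm) : IsValue (.pair t u)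
  | inl (t : Tm) : IsValue (.inl t)
  | inr (t : Tm) : IsValue (.inr t)
  | lam (x : ℕ) (t : Tm) : IsValue (.lam x t)
  | fold (t : Tm) : IsValue (.fold t)
  | next (t : Tm) : IsValue (.next t)
  | box (s : List (ℕ × Tm)) (t : Tm) : IsValue (.box s t)

/-- The basic reduction rules of the guarded lambda calculus. -/
inductive HeadRed : Tm → Tm → Prop
  | fstR (t1 t2 : Tm) : HeadRed (.fst (.pair t1 t2)) t1
  | sndR (t1 t2 : Tm) : HeadRed (.snd (.pair t1 t2)) t2
  | caseL (t : Tm) (x1 : ℕ) (t1 : Tm) (x2 : ℕ) (t2 : Tm) :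
      HeadRed (.case (.inl t) x1 t1 x2 t2) (t1.sub1 t x1)
  | caseR (t : Tm) (x1 : ℕ) (t1 : Tm) (x2 : ℕ) (t2 : Tm) :
      HeadRed (.case (.inr t) x1 t1 x2 t2) (t2.sub1 t x2)
  | beta (x : ℕ) (t1 t2 : Tm) : HeadRed (.app (.lam x t1) t2) (t1.sub1 t2 x)
  | unfoldFold (t : Tm) : HeadRed (.unfold (.fold t)) t
  | prevSub (s : List (ℕ × Tm)) (t : Tm) (hs : s ≠ []) :
      HeadRed (.prev s t) (.prev [] (Tm.subList s t))
  | prevNext (t : Tm) : HeadRed (.prev [] (.next t)) t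
  | apNext (t1 t2 : Tm) : HeadRed (.ap (.next t1) (.next t2)) (.next (.app t1 t2))
  | unboxBox (s : List (ℕ × Tm)) (t : Tm) :
      HeadRed (.unbox (.box s t)) (Tm.subList s t)

/-- Evaluation contexts.  In `v ⊛ E` the left component must be a value. -/
inductive Ctx : Type
  | hole
  | succC (E : Ctx)
  | fstC (E : Ctx)
  | sndC (E : Ctx)
  | caseC (E : Ctx) (x1 : ℕ) (t1 : Tm) (x2 : ℕ) (t2 : Tm)
  | appC (E : Ctx) (u : Tm)
  | unfoldC (E : Ctx)
  | prevC (E : Ctx)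
  | apL (E : Ctx) (u : Tm)
  | apV (v : Tm) (hv : IsValue v) (E : Ctx)
  | unboxC (E : Ctx)

/-- Plugging a term into an evaluation context. -/
def Ctx.plug : Ctx → Tm → Tm
  | .hole, t => t
  | .succC E, t => .succ (E.plug t)
  | .fstC E, t => .fst (E.plug t)
  | .sndC E, t => .snd (E.plug t)
  | .caseC E x1 t1 x2 t2, t => .case (E.plug t) x1 t1 x2 t2
  | .appC E u, t => .app (E.plug t) u
  | .unfoldC E, t => .unfold (E.plug t)
  | .prevC E, t => .prev [] (E.plug t)
  | .apL E u, t => .ap (E.plug t) u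
  | .apV v _ E, t => .ap v (E.plug t)
  | .unboxC E, t => .unbox (E.plug t)

/-- Call-by-name reduction: `E[t] ↦ E[u]` for a reduction rule `t ↦ u` and an
evaluation context `E`. -/
def Step (a b : Tm) : Prop :=
  ∃ (E : Ctx) (t u : Tm), HeadRed t u ∧ a = E.plug t ∧ b = E.plug u


/-- A type is constant if all occurrences of `▶` in its syntax tree lie beneath an
occurrence of `■`. -/
def GTy.isConstant : GTy → Prop
  | .var _ => True
  | .natT => True
  | .unitT => True
  | .emptyT => True
  | .prod A1 A2 => A1.isConstant ∧ A2.isConstant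
  | .sum A1 A2 => A1.isConstant ∧ A2.isConstant
  | .arrow A1 A2 => A1.isConstant ∧ A2.isConstant
  | .mu _ A => A.isConstant
  | .later _ => False
  | .box _ => True

/-- Lookup of a variable in a typing context (most recent binding first). -/
def lookupCtx : List (ℕ × GTy) → ℕ → Option GTy
  | [], _ => none
  | (y, A) :: G, x => if x = y then some A else lookupCtx G x

/-- Typing judgment `Γ ⊢ t : A` of the guarded lambda calculus. -/
inductive Typing : List (ℕ × GTy) → Tm → GTy → Prop
  | var {G x A} : lookupCtx G x = some A → Typing G (.var x) A
  | zero {G} : Typing G .zero .natT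
  | succ {G t} : Typing G t .natT → Typing G (.succ t) .natT
  | unit {G} : Typing G .unit .unitT
  | pair {G t u A B} : Typing G t A → Typing G u B → Typing G (.pair t u) (.prod A B)
  | fst {G t A B} : Typing G t (.prod A B) → Typing G (.fst t) A
  | snd {G t A B} : Typing G t (.prod A B) → Typing G (.snd t) B
  | abort {G t A} : Typing G t .emptyT → Typing G (.abort t) A
  | inl {G t A B} : Typing G t A → Typing G (.inl t) (.sum A B)
  | inr {G t A B} : Typing G t B → Typing G (.inr t) (.sum A B)
  | case {G t x1 t1 x2 t2 A B C} :
      Typing G t (.sum A B) →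
      Typing ((x1, A) :: G) t1 C →
      Typing ((x2, B) :: G) t2 C →
      Typing G (.case t x1 t1 x2 t2) C
  | lam {G x t A B} :
      Typing ((x, A) :: G) t B → Typing G (.lam x t) (.arrow A B)
  | app {G t u A B} :
      Typing G t (.arrow A B) → Typing G u A → Typing G (.app t u) B
  | fold {G t a A} :
      Typing G t (A.subst (.mu a A) a) → Typing G (.fold t) (.mu a A)
  | unfold {G t a A} :
      Typing G t (.mu a A) → Typing G (.unfold t) (A.subst (.mu a A) a)
  | next {G t A} : Typing G t A → Typing G (.next t) (.later A)
  | ap {G t u A B} :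
      Typing G t (.later (.arrow A B)) → Typing G u (.later A) →
      Typing G (.ap t u) (.later B)
  | prev {G} {s : List (ℕ × Tm)} {As : List GTy} {t A} :
      s.length = As.length →
      (∀ B ∈ As, B.isConstant) →
      (∀ q ∈ List.zip s As, Typing G q.1.2 q.2) →
      Typing (List.zip (s.map Prod.fst) As) t (.later A) →
      Typing G (.prev s t) A
  | box {G} {s : List (ℕ × Tm)} {As : List GTy} {t A} :
      s.length = As.length →
      (∀ B ∈ As, B.isConstant) →
      (∀ q ∈ List.zip s As, Typing G q.1.2 q.2) →
      Typing (List.zip (s.map Prod.fst) As) t A →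
      Typing G (.box s t) (.box A)
  | unbox {G t A} : Typing G t (.box A) → Typing G (.unbox t) A

/-!
Preservation is proved for a single step. The key fact is a substitution lemma for substitutions
by closed well-typed terms; these are the only ones needed, since a `prev` or `box` body is typed
in the context of its own explicit substitution and substitution never enters it. This handles
each reduction rule, and preservation lifts through evaluation contexts because the hole of an
evaluation context is always typed in the empty context: `prev [] E` types `E` in the context
of its empty explicit substitution.
-/
lemma lookupCtx_append_of_eq_some {G : List (ℕ × GTy)} {x : ℕ} {A : GTy}
    (h : lookupCtx G x = some A) (D : List (ℕ × GTy)) : lookupCtx (G ++ D) x = some A := by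
  induction G with
  | nil => simp [lookupCtx] at h
  | cons p G ih =>
    simp only [lookupCtx, List.cons_append] at h ⊢
    split_ifs at h ⊢
    exacts [h, ih h]

lemma Typing.weaken_append {G : List (ℕ × GTy)} {t : Tm} {A : GTy} (h : Typing G t A)
    (D : List (ℕ × GTy)) : Typing (G ++ D) t A := by
  induction h with
  | var hx => exact .var (lookupCtx_append_of_eq_some hx D)
  | zero => exact .zero
  | succ _ ih => exact .succ ih
  | unit => exact .unit
  | pair _ _ ih₁ ih₂ => exact .pair ih₁ ih₂
  | fst _ ih => exact .fst ih
  | snd _ ih => exact .snd ih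
  | abort _ ih => exact .abort ih
  | inl _ ih => exact .inl ih
  | inr _ ih => exact .inr ih
  | case _ _ _ ih ih₁ ih₂ => exact .case ih ih₁ ih₂
  | lam _ ih => exact .lam ih
  | app _ _ ih₁ ih₂ => exact .app ih₁ ih₂
  | fold _ ih => exact .fold ih
  | unfold _ ih => exact .unfold ih
  | next _ ih => exact .next ih
  | ap _ _ ih₁ ih₂ => exact .ap ih₁ ih₂
  | prev hl hc _ ht ihs => exact .prev hl hc ihs ht
  | box hl hc _ ht ihs => exact .box hl hc ihs ht
  | unbox _ ih => exact .unbox ih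

lemma Typing.of_nil {t : Tm} {A : GTy} (h : Typing [] t A) (D : List (ℕ × GTy)) :
    Typing D t A :=
  h.weaken_append D

lemma Typing.prev_nil_iff {G : List (ℕ × GTy)} {t : Tm} {A : GTy} :
    Typing G (.prev [] t) A ↔ Typing [] t (.later A) := by
  refine ⟨fun h => ?_, fun h => .prev (As := []) rfl (by simp) (by simp) h⟩
  cases h with
  | @prev _ _ As _ _ hl _ _ ht =>
    obtain rfl : As = [] := List.length_eq_zero_iff.mp hl.symm
    simpa using ht

@[simp]
lemma Tm.msubst_prev (r : ℕ → Option Tm) (s : List (ℕ × Tm)) (t : Tm) :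
    (Tm.prev s t).msubst r = .prev (s.map fun p => (p.1, p.2.msubst r)) t := by
  simp [Tm.msubst, List.map_attach_eq_pmap]

@[simp]
lemma Tm.msubst_box (r : ℕ → Option Tm) (s : List (ℕ × Tm)) (t : Tm) :
    (Tm.box s t).msubst r = .box (s.map fun p => (p.1, p.2.msubst r)) t := by
  simp [Tm.msubst, List.map_attach_eq_pmap]

/-- `r` sends every variable of `G` either to a closed term of its type or, leaving it
unchanged, to a variable of the same type in `D`. -/
def SubstWellTyped (G D : List (ℕ × GTy)) (r : ℕ → Option Tm) : Prop :=
  ∀ x B, lookupCtx G x = some B →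
    (∃ u, r x = some u ∧ Typing [] u B) ∨ (r x = none ∧ lookupCtx D x = some B)

lemma SubstWellTyped.cons {G D : List (ℕ × GTy)} {r : ℕ → Option Tm}
    (hr : SubstWellTyped G D r) (x : ℕ) (A : GTy) :
    SubstWellTyped ((x, A) :: G) ((x, A) :: D) (fun y => if y = x then none else r y) := by
  intro y B hy
  simp only [lookupCtx] at hy ⊢
  split_ifs at hy ⊢ with hyx
  · exact .inr ⟨rfl, hy⟩
  · simpa [hyx] using hr y B hy

lemma forall_mem_zip_map_msubst {D : List (ℕ × GTy)} {s : List (ℕ × Tm)} {As : List GTy}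
    {r : ℕ → Option Tm} (hs : ∀ q ∈ List.zip s As, Typing D (q.1.2.msubst r) q.2) :
    ∀ q ∈ List.zip (s.map fun p => (p.1, p.2.msubst r)) As, Typing D q.1.2 q.2 := by
  simp only [List.zip_map_left, List.mem_map, forall_exists_index, and_imp]
  rintro _ q hq rfl
  exact hs q hq

theorem Typing.msubst {G : List (ℕ × GTy)} {t : Tm} {A : GTy} (h : Typing G t A) :
    ∀ {D : List (ℕ × GTy)} {r : ℕ → Option Tm}, SubstWellTyped G D r →
      Typing D (t.msubst r) A := by
  induction h <;> intro D r hr <;> simp only [Tm.msubst_prev, Tm.msubst_box, Tm.msubst]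
  case var x A hx =>
    rcases hr x A hx with ⟨u, hu, hu_ty⟩ | ⟨hnone, hD⟩
    · simpa [hu] using hu_ty.of_nil D
    · simpa [hnone] using Typing.var hD
  case zero => exact .zero
  case succ ih => exact .succ (ih hr)
  case unit => exact .unit
  case pair ih₁ ih₂ => exact .pair (ih₁ hr) (ih₂ hr)
  case fst ih => exact .fst (ih hr)
  case snd ih => exact .snd (ih hr)
  case abort ih => exact .abort (ih hr)
  case inl ih => exact .inl (ih hr)
  case inr ih => exact .inr (ih hr)
  case case ih ih₁ ih₂ => exact .case (ih hr) (ih₁ (hr.cons _ _)) (ih₂ (hr.cons _ _))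
  case lam ih => exact .lam (ih (hr.cons _ _))
  case app ih₁ ih₂ => exact .app (ih₁ hr) (ih₂ hr)
  case fold ih => exact .fold (ih hr)
  case unfold ih => exact .unfold (ih hr)
  case next ih => exact .next (ih hr)
  case ap ih₁ ih₂ => exact .ap (ih₁ hr) (ih₂ hr)
  case prev hl hc _ ht ihs _ =>
    exact .prev (by simpa using hl) hc (forall_mem_zip_map_msubst fun q hq => ihs q hq hr)
      (by simpa [Function.comp_def] using ht)
  case box hl hc _ ht ihs _ =>
    exact .box (by simpa using hl) hc (forall_mem_zip_map_msubst fun q hq => ihs q hq hr)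
      (by simpa [Function.comp_def] using ht)
  case unbox ih => exact .unbox (ih hr)

lemma substWellTyped_explicitSubst {s : List (ℕ × Tm)} {As : List GTy}
    (hl : s.length = As.length) (hs : ∀ q ∈ List.zip s As, Typing [] q.1.2 q.2) :
    SubstWellTyped (List.zip (s.map Prod.fst) As) []
      (fun y => (s.find? fun p => p.1 = y).map Prod.snd) := by
  induction s generalizing As with
  | nil => simp [SubstWellTyped, lookupCtx]
  | cons p s ih =>
    obtain ⟨y, v⟩ := p
    obtain _ | ⟨B, As⟩ := As
    · simp at hl
    intro x C hx
    simp only [List.map_cons, List.zip_cons_cons, lookupCtx] at hx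
    split_ifs at hx with hxy
    · subst hxy
      cases hx
      exact .inl ⟨v, by simp, hs ((x, v), B) (by simp)⟩
    · have hyx : ¬ y = x := fun h => hxy h.symm
      simpa [List.find?_cons, hyx] using
        ih (by simpa using hl) (fun q hq => hs q (by simp [hq])) x C hx

lemma Typing.subList {s : List (ℕ × Tm)} {As : List GTy} {t : Tm} {B : GTy}
    (hl : s.length = As.length) (hs : ∀ q ∈ List.zip s As, Typing [] q.1.2 q.2)
    (ht : Typing (List.zip (s.map Prod.fst) As) t B) : Typing [] (Tm.subList s t) B :=
  ht.msubst (substWellTyped_explicitSubst hl hs)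

lemma Typing.sub1 {x : ℕ} {t u : Tm} {A B : GTy}
    (ht : Typing [(x, A)] t B) (hu : Typing [] u A) : Typing [] (t.sub1 u x) B := by
  refine ht.msubst fun y C hy => ?_
  simp only [lookupCtx] at hy
  split_ifs at hy with hyx
  · cases hy
    exact .inl ⟨u, by simp [hyx], hu⟩

theorem HeadRed.preserves_typing {t u : Tm} (h : HeadRed t u) {A : GTy}
    (ht : Typing [] t A) : Typing [] u A := by
  cases h with
  | fstR => cases ht with | fst h => cases h with | pair h₁ _ => exact h₁
  | sndR => cases ht with | snd h => cases h with | pair _ h₂ => exact h₂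
  | caseL =>
    cases ht with | case h h₁ _ => cases h with | inl h => exact h₁.sub1 h
  | caseR =>
    cases ht with | case h _ h₂ => cases h with | inr h => exact h₂.sub1 h
  | beta => cases ht with | app h hu => cases h with | lam h => exact h.sub1 hu
  | unfoldFold => cases ht with | unfold h => cases h with | fold h => exact h
  | prevSub =>
    cases ht with | prev hl _ hs ht => exact Typing.prev_nil_iff.mpr (ht.subList hl hs)
  | prevNext => cases Typing.prev_nil_iff.mp ht with | next h => exact h
  | apNext =>
    cases ht with | ap h₁ h₂ =>
      cases h₁ with | next h₁ => cases h₂ with | next h₂ => exact .next (.app h₁ h₂)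
  | unboxBox =>
    cases ht with | unbox h => cases h with | box hl _ hs ht => exact ht.subList hl hs

lemma Ctx.typing_plug_of_forall {t u : Tm} (hu : ∀ A, Typing [] t A → Typing [] u A)
    (E : Ctx) {A : GTy} (hE : Typing [] (E.plug t) A) : Typing [] (E.plug u) A := by
  induction E generalizing A with
  | hole => exact hu A hE
  | succC E ih => cases hE with | succ h => exact .succ (ih h)
  | fstC E ih => cases hE with | fst h => exact .fst (ih h)
  | sndC E ih => cases hE with | snd h => exact .snd (ih h)
  | caseC E _ _ _ _ ih => cases hE with | case h h₁ h₂ => exact .case (ih h) h₁ h₂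
  | appC E _ ih => cases hE with | app h h' => exact .app (ih h) h'
  | unfoldC E ih => cases hE with | unfold h => exact .unfold (ih h)
  | prevC E ih => exact Typing.prev_nil_iff.mpr (ih (Typing.prev_nil_iff.mp hE))
  | apL E _ ih => cases hE with | ap h h' => exact .ap (ih h) h'
  | apV _ _ E ih => cases hE with | ap h' h => exact .ap h' (ih h)
  | unboxC E ih => cases hE with | unbox h => exact .unbox (ih h)

theorem Step.preserves_typing {t u : Tm} (h : Step t u) {A : GTy} (ht : Typing [] t A) :
    Typing [] u A := by
  obtain ⟨E, t₀, u₀, hred, rfl, rfl⟩ := h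
  exact E.typing_plug_of_forall (fun _ => hred.preserves_typing) ht

/-- Subject reduction for closed terms: if `⊢ t : A` and `t ↦* u` under
call-by-name reduction, then `⊢ u : A`. -/
theorem subject_reduction_closed (t u : Tm) (A : GTy)
    (ht : Typing [] t A) (hred : Relation.ReflTransGen Step t u) :
    Typing [] u A := by
  induction hred with
  | refl => exact ht
  | tail _ hstep ih => exact hstep.preserves_typing ih
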